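/- arXiv:2204.11316 — 5 statements merged into one kernel-verified Lean document; each statement's English description precedes it below -/
import Mathlib

section
/- For every natural number n and real p with 0 < p ≤ 1, the total variation-type sum ∑_{m=0}^∞ |(np)^m/m! · e^{-np} − C(n,m) p^m (1−p)^{n−m}| is at most 2p (with the convention C(n,m)=0 for m>n). -/
/-!
Stein's method for the Poisson law `π = Po(r)` with distribution function `F`. For each `k`, the
function `g_k` with `g_k (j + 1) = π k (𝟙[k ≤ j] - F j) / (r π j)` solves the Stein equation
`r g (j + 1) - j g j = 𝟙[j = k] - π k`, and since `F j / π j` increases and `(1 - F j) / π j`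
decreases in `j`, its increments `g_k (j + 2) - g_k (j + 1)` are `≤ 0` except when `j + 1 = k`,
where they are at most `1 / r`.
For `W ~ Bin(n + 1, p)`, `W' ~ Bin(n, p)` and `r = (n + 1) p` one has
`E[r g (W + 1) - W g W] = r p E[g (W' + 2) - g (W' + 1)]`, so summing over `k ∈ A` gives
`Bin(A) - Po(A) ≤ r p / r = p` for every finite `A`, and the `ℓ¹` distance of two probability
vectors is twice the largest such difference.
-/

open Finset Real
open scoped Nat

namespace Vervaat

theorem tsum_abs_sub_le_two_mul {α : Type*} {f g : α → ℝ} {a ε : ℝ} (s : Finset α)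
    (hf : HasSum f a) (hg : HasSum g a) (hf0 : ∀ x, 0 ≤ f x) (hgs : ∀ x ∉ s, g x = 0)
    (hε : ∀ t ⊆ s, ∑ x ∈ t, (g x - f x) ≤ ε) : ∑' x, |f x - g x| ≤ 2 * ε := by
  have hpos : HasSum (fun x ↦ max (g x - f x) 0) (∑ x ∈ s, max (g x - f x) 0) :=
    hasSum_sum_of_ne_finset_zero fun x hx ↦ by simp [hgs x hx, hf0 x]
  have habs (x : α) : |f x - g x| = 2 * max (g x - f x) 0 - (g x - f x) := by
    rcases le_total (g x) (f x) with h | h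
    · rw [max_eq_right (by linarith), abs_of_nonneg (by linarith)]; ring
    · rw [max_eq_left (by linarith), abs_of_nonpos (by linarith)]; ring
  have hsum := (hpos.mul_left 2).sub (hg.sub hf)
  rw [sub_self, sub_zero] at hsum
  rw [funext habs, hsum.tsum_eq]
  have hfilter : ∑ x ∈ s, max (g x - f x) 0 = ∑ x ∈ s.filter (fun x ↦ f x ≤ g x), (g x - f x) := by
    rw [sum_filter]
    refine sum_congr rfl fun x _ ↦ ?_
    split_ifs with h
    · exact max_eq_left (by linarith)
    · exact max_eq_right (by linarith)
  rw [hfilter]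
  gcongr
  exact hε _ (filter_subset _ _)

section Poisson

variable (r : ℝ)

noncomputable def poissonWeight (m : ℕ) : ℝ := r ^ m / m ! * exp (-r)

noncomputable def poissonCDF (j : ℕ) : ℝ := ∑ i ∈ range (j + 1), poissonWeight r i

variable {r}

lemma poissonWeight_pos (hr : 0 < r) (m : ℕ) : 0 < poissonWeight r m := by
  unfold poissonWeight; positivity

lemma poissonWeight_nonneg (hr : 0 ≤ r) (m : ℕ) : 0 ≤ poissonWeight r m := by
  unfold poissonWeight; positivity

variable (r)

lemma hasSum_poissonWeight : HasSum (poissonWeight r) 1 := by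
  have h := (NormedSpace.expSeries_div_hasSum_exp r).mul_right (exp (-r))
  rwa [← exp_eq_exp_ℝ, ← exp_add, add_neg_cancel, exp_zero] at h

lemma succ_mul_poissonWeight_succ (m : ℕ) :
    (m + 1) * poissonWeight r (m + 1) = r * poissonWeight r m := by
  unfold poissonWeight
  rw [Nat.factorial_succ, pow_succ]
  push_cast
  field_simp

variable {r}

lemma mul_poissonCDF_le (hr : 0 ≤ r) (j : ℕ) :
    r * poissonCDF r j ≤ (j + 1) * poissonCDF r (j + 1) := by
  calc r * poissonCDF r j = ∑ i ∈ range (j + 1), (i + 1) * poissonWeight r (i + 1) := by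
        simp only [poissonCDF, mul_sum, succ_mul_poissonWeight_succ]
    _ ≤ ∑ i ∈ range (j + 1), (j + 1) * poissonWeight r (i + 1) := by
        gcongr with i hi
        · exact poissonWeight_nonneg hr _
        · exact_mod_cast Nat.lt_succ_iff.mp (mem_range.mp hi)
    _ ≤ (j + 1) * poissonCDF r (j + 1) := by
        rw [← mul_sum, poissonCDF, sum_range_succ' _ (j + 1)]
        have := poissonWeight_nonneg hr 0
        gcongr
        linarith

lemma succ_mul_one_sub_poissonCDF_le (hr : 0 ≤ r) (j : ℕ) :
    (j + 1) * (1 - poissonCDF r (j + 1)) ≤ r * (1 - poissonCDF r j) := by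
  have tail (j : ℕ) : HasSum (fun s ↦ poissonWeight r (s + (j + 1))) (1 - poissonCDF r j) :=
    (hasSum_nat_add_iff' (j + 1)).mpr (hasSum_poissonWeight r)
  refine hasSum_le (fun s ↦ ?_) ((tail (j + 1)).mul_left _) ((tail j).mul_left _)
  have : (j + 1 : ℝ) ≤ (s + (j + 1) : ℕ) + 1 := by push_cast; linarith [s.cast_nonneg (α := ℝ)]
  calc (j + 1 : ℝ) * poissonWeight r (s + (j + 1) + 1)
      ≤ ((s + (j + 1) : ℕ) + 1) * poissonWeight r (s + (j + 1) + 1) := by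
        gcongr
        exact poissonWeight_nonneg hr _
    _ = r * poissonWeight r (s + (j + 1)) := succ_mul_poissonWeight_succ r _

lemma monotone_poissonCDF_div (hr : 0 < r) :
    Monotone fun j ↦ poissonCDF r j / poissonWeight r j := by
  refine monotone_nat_of_le_succ fun j ↦ ?_
  have hj := poissonWeight_pos hr j
  have hj1 := poissonWeight_pos hr (j + 1)
  rw [div_le_div_iff₀ hj hj1]
  refine le_of_mul_le_mul_left ?_ (by positivity : (0 : ℝ) < j + 1)
  linear_combination mul_le_mul_of_nonneg_right (mul_poissonCDF_le hr.le j) hj.le +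
    poissonCDF r j * succ_mul_poissonWeight_succ r j

lemma antitone_one_sub_poissonCDF_div (hr : 0 < r) :
    Antitone fun j ↦ (1 - poissonCDF r j) / poissonWeight r j := by
  refine antitone_nat_of_succ_le fun j ↦ ?_
  have hj := poissonWeight_pos hr j
  have hj1 := poissonWeight_pos hr (j + 1)
  rw [div_le_div_iff₀ hj1 hj]
  refine le_of_mul_le_mul_left ?_ (by positivity : (0 : ℝ) < j + 1)
  linear_combination mul_le_mul_of_nonneg_right (succ_mul_one_sub_poissonCDF_le hr.le j) hj.le -
    (1 - poissonCDF r j) * succ_mul_poissonWeight_succ r j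

variable (r)

noncomputable def steinSolution (k : ℕ) : ℕ → ℝ
  | 0 => 0
  | j + 1 => poissonWeight r k / r *
      (((if k ≤ j then 1 else 0) - poissonCDF r j) / poissonWeight r j)

variable {r}

lemma steinSolution_equation (hr : 0 < r) (k j : ℕ) :
    r * steinSolution r k (j + 1) - j * steinSolution r k j =
      (if j = k then 1 else 0) - poissonWeight r k := by
  have hj := (poissonWeight_pos hr j).ne'
  cases j with
  | zero =>
    have hF : poissonCDF r 0 = poissonWeight r 0 := sum_range_one _
    rcases eq_or_ne k 0 with rfl | hk
    · simp only [steinSolution, hF, le_refl, if_true, Nat.cast_zero, zero_mul, sub_zero]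
      field_simp
    · simp only [steinSolution, hF, nonpos_iff_eq_zero, hk, hk.symm, if_false, Nat.cast_zero,
        zero_mul, sub_zero, zero_sub]
      field_simp
  | succ j =>
    have hj' := (poissonWeight_pos hr j).ne'
    have hrec := succ_mul_poissonWeight_succ r j
    have hF : poissonCDF r (j + 1) = poissonCDF r j + poissonWeight r (j + 1) := sum_range_succ _ _
    simp only [steinSolution, hF, Nat.cast_add, Nat.cast_one]
    rcases lt_trichotomy k (j + 1) with hk | rfl | hk
    · simp only [hk.le, Nat.le_of_lt_succ hk, hk.ne', if_true, if_false, zero_sub]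
      field_simp
      linear_combination -(poissonWeight r k * (1 - poissonCDF r j)) * hrec
    · simp only [le_refl, Nat.not_succ_le_self, if_true, if_false, zero_sub]
      field_simp
      linear_combination poissonCDF r j * hrec
    · simp only [not_le.mpr hk, not_le.mpr (Nat.lt_of_succ_lt hk), hk.ne, if_false, zero_sub]
      field_simp
      linear_combination poissonWeight r k * poissonCDF r j * hrec

lemma steinSolution_succ_sub_le (hr : 0 < r) (k j : ℕ) :
    steinSolution r k (j + 2) - steinSolution r k (j + 1) ≤ if k = j + 1 then r⁻¹ else 0 := by
  have hmono := monotone_poissonCDF_div hr (Nat.le_succ j)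
  have hanti := antitone_one_sub_poissonCDF_div hr (Nat.le_succ j)
  have hc := (poissonWeight_pos hr k).le
  simp only [steinSolution]
  rcases lt_trichotomy k (j + 1) with hk | rfl | hk
  · have hkj : k ≤ j := Nat.le_of_lt_succ hk
    simp only [hk.ne, hkj, hk.le, if_true, if_false]
    rw [← mul_sub]
    exact mul_nonpos_of_nonneg_of_nonpos (by positivity) (by simpa using hanti)
  · have hP := (poissonWeight_pos hr (j + 1)).ne'
    simp only [le_refl, Nat.not_succ_le_self, if_true, if_false, zero_sub, neg_div]
    calc poissonWeight r (j + 1) / r * ((1 - poissonCDF r (j + 1)) / poissonWeight r (j + 1)) -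
          poissonWeight r (j + 1) / r * -(poissonCDF r j / poissonWeight r j)
        ≤ poissonWeight r (j + 1) / r * ((1 - poissonCDF r (j + 1)) / poissonWeight r (j + 1)) +
          poissonWeight r (j + 1) / r * (poissonCDF r (j + 1) / poissonWeight r (j + 1)) := by
          rw [mul_neg, sub_neg_eq_add]
          gcongr
      _ = r⁻¹ := by field_simp; ring
  · simp only [hk.ne', not_le.mpr hk, not_le.mpr (Nat.lt_of_succ_lt hk), if_false, zero_sub,
      neg_div]
    rw [← mul_sub]
    exact mul_nonpos_of_nonneg_of_nonpos (by positivity) (by simpa using hmono)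

end Poisson

section Binomial

variable (p : ℝ)

noncomputable def binomialWeight (n m : ℕ) : ℝ := n.choose m * p ^ m * (1 - p) ^ (n - m)

variable {p}

lemma binomialWeight_nonneg (hp0 : 0 ≤ p) (hp1 : p ≤ 1) (n m : ℕ) :
    0 ≤ binomialWeight p n m := by
  have : 0 ≤ 1 - p := sub_nonneg.mpr hp1
  unfold binomialWeight; positivity

lemma binomialWeight_eq_zero_of_lt {n m : ℕ} (h : n < m) : binomialWeight p n m = 0 := by
  simp [binomialWeight, Nat.choose_eq_zero_of_lt h]

variable (p)

lemma sum_binomialWeight (n : ℕ) : ∑ m ∈ range (n + 1), binomialWeight p n m = 1 := by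
  have h := add_pow p (1 - p) n
  rw [add_sub_cancel, one_pow] at h
  rw [h]
  exact sum_congr rfl fun m _ ↦ by unfold binomialWeight; ring

lemma hasSum_binomialWeight (n : ℕ) : HasSum (binomialWeight p n) 1 := by
  rw [← sum_binomialWeight p n]
  exact hasSum_sum_of_ne_finset_zero fun m hm ↦
    binomialWeight_eq_zero_of_lt (by simpa using hm)

lemma binomialWeight_succ_succ (n k : ℕ) :
    binomialWeight p (n + 1) (k + 1) =
      p * binomialWeight p n k + (1 - p) * binomialWeight p n (k + 1) := by
  unfold binomialWeight
  rcases Nat.lt_or_ge k n with hk | hk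
  · obtain ⟨d, rfl⟩ := Nat.exists_eq_add_of_lt hk
    rw [Nat.choose_succ_succ, show k + d + 1 + 1 - (k + 1) = d + 1 by omega,
      show k + d + 1 - k = d + 1 by omega, show k + d + 1 - (k + 1) = d by omega]
    push_cast
    ring
  · rw [Nat.choose_succ_succ, Nat.choose_eq_zero_of_lt (by omega : n < k + 1),
      Nat.succ_sub_succ]
    push_cast
    ring

lemma sum_binomialWeight_succ_mul (n : ℕ) (f : ℕ → ℝ) :
    ∑ m ∈ range (n + 2), binomialWeight p (n + 1) m * f m =
      ∑ m ∈ range (n + 1), binomialWeight p n m * ((1 - p) * f m + p * f (m + 1)) := by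
  have h0 : binomialWeight p (n + 1) 0 = (1 - p) * binomialWeight p n 0 := by
    simp [binomialWeight, pow_succ, mul_comm]
  have htop : ∑ k ∈ range (n + 1), binomialWeight p n (k + 1) * f (k + 1) =
      ∑ k ∈ range n, binomialWeight p n (k + 1) * f (k + 1) := by
    rw [sum_range_succ, binomialWeight_eq_zero_of_lt n.lt_succ_self, zero_mul, add_zero]
  calc ∑ m ∈ range (n + 2), binomialWeight p (n + 1) m * f m
      = binomialWeight p (n + 1) 0 * f 0 +
          ∑ k ∈ range (n + 1), binomialWeight p (n + 1) (k + 1) * f (k + 1) := by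
        rw [sum_range_succ', add_comm]
    _ = (1 - p) * (∑ k ∈ range n, binomialWeight p n (k + 1) * f (k + 1) +
          binomialWeight p n 0 * f 0) +
          p * ∑ m ∈ range (n + 1), binomialWeight p n m * f (m + 1) := by
        rw [h0, ← htop]
        simp only [binomialWeight_succ_succ, add_mul, sum_add_distrib, mul_add, mul_sum, mul_assoc]
        ring
    _ = (1 - p) * ∑ m ∈ range (n + 1), binomialWeight p n m * f m +
          p * ∑ m ∈ range (n + 1), binomialWeight p n m * f (m + 1) := by
        rw [sum_range_succ' (fun m ↦ binomialWeight p n m * f m)]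
    _ = _ := by
        rw [mul_sum, mul_sum, ← sum_add_distrib]
        exact sum_congr rfl fun _ _ ↦ by ring

lemma sum_mul_binomialWeight_succ_mul (n : ℕ) (f : ℕ → ℝ) :
    ∑ m ∈ range (n + 2), m * binomialWeight p (n + 1) m * f m =
      (n + 1) * p * ∑ m ∈ range (n + 1), binomialWeight p n m * f (m + 1) := by
  rw [sum_range_succ', mul_sum]
  refine (add_eq_left.mpr (by simp)).trans (sum_congr rfl fun k _ ↦ ?_)
  have hchoose : ((n + 1 : ℕ) : ℝ) * (n.choose k : ℝ) =
      ((n + 1).choose (k + 1) : ℝ) * (k + 1 : ℕ) := by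
    exact_mod_cast Nat.add_one_mul_choose_eq n k
  simp only [binomialWeight, Nat.succ_sub_succ]
  push_cast at hchoose ⊢
  linear_combination (-(f (k + 1)) * p ^ (k + 1) * (1 - p) ^ (n - k)) * hchoose

lemma sum_binomialWeight_mul_stein (n : ℕ) (f : ℕ → ℝ) :
    ∑ m ∈ range (n + 2), binomialWeight p (n + 1) m * ((n + 1) * p * f (m + 1) - m * f m) =
      (n + 1) * p * p * ∑ m ∈ range (n + 1), binomialWeight p n m * (f (m + 2) - f (m + 1)) := by
  calc _ = (n + 1) * p * ∑ m ∈ range (n + 2), binomialWeight p (n + 1) m * f (m + 1) -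
        ∑ m ∈ range (n + 2), m * binomialWeight p (n + 1) m * f m := by
        rw [mul_sum, ← sum_sub_distrib]
        exact sum_congr rfl fun m _ ↦ by ring
    _ = _ := by
        rw [sum_binomialWeight_succ_mul, sum_mul_binomialWeight_succ_mul, ← mul_sub,
          ← sum_sub_distrib, mul_sum, mul_sum]
        exact sum_congr rfl fun m _ ↦ by ring

end Binomial

lemma sum_binomialWeight_sub_poissonWeight_le {p : ℝ} (hp : 0 < p) (hp1 : p ≤ 1) (n : ℕ)
    (A : Finset ℕ) : ∑ k ∈ A, (binomialWeight p n k - poissonWeight (n * p) k) ≤ p := by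
  cases n with
  | zero =>
    have hzero (k : ℕ) : binomialWeight p 0 k - poissonWeight ((0 : ℕ) * p) k = 0 := by
      cases k <;> simp [binomialWeight, poissonWeight]
    rw [sum_congr rfl fun k _ ↦ hzero k, sum_const_zero]
    exact hp.le
  | succ n =>
    push_cast
    set r := ((n : ℝ) + 1) * p with hr_def
    have hr : 0 < r := by positivity
    have hstein (k : ℕ) : binomialWeight p (n + 1) k - poissonWeight r k =
        r * p * ∑ m ∈ range (n + 1), binomialWeight p n m *
          (steinSolution r k (m + 2) - steinSolution r k (m + 1)) := by
      have hone : ∑ m ∈ range (n + 2), binomialWeight p (n + 1) m = 1 := sum_binomialWeight p _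
      rw [← sum_binomialWeight_mul_stein, ← hr_def]
      simp only [steinSolution_equation hr, mul_sub, mul_ite, mul_one, mul_zero, sum_sub_distrib,
        sum_ite_eq', ← sum_mul, hone, one_mul]
      split_ifs with hk
      · rfl
      · rw [binomialWeight_eq_zero_of_lt (by simp only [mem_range, not_lt] at hk; omega)]
    have hjump (m : ℕ) : ∑ k ∈ A, (steinSolution r k (m + 2) - steinSolution r k (m + 1)) ≤ r⁻¹ :=
      calc _ ≤ ∑ k ∈ A, if k = m + 1 then r⁻¹ else 0 :=
            sum_le_sum fun k _ ↦ steinSolution_succ_sub_le hr k m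
        _ ≤ r⁻¹ := by
            rw [sum_ite_eq']
            split_ifs
            exacts [le_rfl, inv_nonneg.mpr hr.le]
    calc ∑ k ∈ A, (binomialWeight p (n + 1) k - poissonWeight r k)
        = r * p * ∑ m ∈ range (n + 1), binomialWeight p n m *
            ∑ k ∈ A, (steinSolution r k (m + 2) - steinSolution r k (m + 1)) := by
          simp only [hstein, mul_sum]
          exact sum_comm
      _ ≤ r * p * ∑ m ∈ range (n + 1), binomialWeight p n m * r⁻¹ := by
          gcongr with m
          · exact binomialWeight_nonneg hp.le hp1 n m
          · exact hjump m
      _ = p := by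
          rw [← sum_mul, sum_binomialWeight]
          field_simp

end Vervaat

/-- Vervaat's inequality: the total variation-type distance between the Poisson
distribution with mean `n*p` and the binomial distribution with parameters `n, p`
is at most `2*p`. Here `Nat.choose n m = 0` for `m > n`. -/
theorem poisson_binomial_tv_le (n : ℕ) (p : ℝ) (hp : 0 < p) (hp1 : p ≤ 1) :
    ∑' m : ℕ, |((n : ℝ) * p) ^ m / (Nat.factorial m) * Real.exp (-((n : ℝ) * p)) -
      (n.choose m : ℝ) * p ^ m * (1 - p) ^ (n - m)| ≤ 2 * p :=
  Vervaat.tsum_abs_sub_le_two_mul (range (n + 1)) (Vervaat.hasSum_poissonWeight _)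
    (Vervaat.hasSum_binomialWeight p n) (Vervaat.poissonWeight_nonneg (by positivity))
    (fun _ hm ↦ Vervaat.binomialWeight_eq_zero_of_lt (by simpa using hm))
    (fun A _ ↦ Vervaat.sum_binomialWeight_sub_poissonWeight_le hp hp1 n A)
end

section
/- For every natural number n and real p with 0 < p ≤ 1, the first-moment weighted sum ∑_{m=0}^∞ m · |(np)^m/m! · e^{-np} − C(n,m) p^m (1−p)^{n−m}| is at most 2np². -/
open Real Finset Nat

/-! The summand at `m + 1` equals `n p · |Poi(np)(m) - Bin(n-1,p)(m)|`, by
`m · r^m/m! = r · r^(m-1)/(m-1)!` and `m · C(n,m) = n · C(n-1,m-1)`; so it suffices that the total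
variation `∑ |Poi(np) - Bin(n-1,p)|` is at most `2p`. Both are probability distributions, and
`(1-p) · Bin(n-1,p) ≤ Poi(np)` pointwise, so `|f - g| ≤ f - g + 2p g` sums to the bound.
Maximising `(1-p)^(n-j) e^(np)` over `p` reduces the pointwise bound to
`(n-1)⋯(n-j) · (n-j)^(n-j) · e^j ≤ n^n`, proved by induction on `j` from `e m^(m+1) ≤ (m+1)^(m+1)`.
Both estimates are instances of `1 + t ≤ e^t`. -/

noncomputable def poissonWeight (r : ℝ) (m : ℕ) : ℝ :=
  r ^ m / (m ! : ℝ) * exp (-r)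

def binomialWeight (n : ℕ) (p : ℝ) (m : ℕ) : ℝ :=
  (n.choose m : ℝ) * p ^ m * (1 - p) ^ (n - m)

theorem hasSum_poissonWeight (r : ℝ) : HasSum (poissonWeight r) 1 := by
  have h := (NormedSpace.expSeries_div_hasSum_exp r).mul_right (exp (-r))
  rwa [← exp_eq_exp_ℝ, ← exp_add, add_neg_cancel, exp_zero] at h

theorem hasSum_binomialWeight (n : ℕ) (p : ℝ) : HasSum (binomialWeight n p) 1 := by
  have h : HasSum (binomialWeight n p) (∑ m ∈ range (n + 1), binomialWeight n p m) :=
    hasSum_sum_of_ne_finset_zero fun m hm => by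
      rw [binomialWeight, Nat.choose_eq_zero_of_lt (by simpa using hm)]
      simp
  convert h
  rw [← one_pow n, ← add_sub_cancel p 1, add_pow]
  refine sum_congr rfl fun m _ => ?_
  rw [binomialWeight]
  ring

theorem succ_mul_poissonWeight_succ (r : ℝ) (m : ℕ) :
    (m + 1) * poissonWeight r (m + 1) = r * poissonWeight r m := by
  simp only [poissonWeight, factorial_succ, cast_mul, cast_succ, pow_succ]
  field_simp

theorem succ_mul_binomialWeight_succ (n : ℕ) (p : ℝ) (m : ℕ) :
    (m + 1) * binomialWeight (n + 1) p (m + 1) = (n + 1) * p * binomialWeight n p m := by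
  have h : ((n + 1 : ℕ) : ℝ) * n.choose m = (n + 1).choose (m + 1) * (m + 1 : ℕ) := by
    exact_mod_cast add_one_mul_choose_eq n m
  simp only [binomialWeight, Nat.add_sub_add_right, pow_succ]
  push_cast at h
  linear_combination (p ^ m * (1 - p) ^ (n - m) * p) * h.symm

theorem binomialWeight_nonneg {p : ℝ} (hp0 : 0 ≤ p) (hp1 : p ≤ 1) (n m : ℕ) :
    0 ≤ binomialWeight n p m := by
  have := sub_nonneg.2 hp1
  unfold binomialWeight
  positivity

theorem abs_sub_le_sub_add_two_mul {a b c : ℝ} (hc : 0 ≤ c) (hb : 0 ≤ b) (h : (1 - c) * b ≤ a) :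
    |a - b| ≤ a - b + 2 * c * b := by
  have hcb := mul_nonneg hc hb
  exact abs_sub_le_iff.2 ⟨by linarith, by linarith⟩

section TotalVariation

variable {ι : Type*} {f g : ι → ℝ} {c s : ℝ}

theorem summable_abs_sub_of_one_sub_mul_le (hc : 0 ≤ c) (hg0 : ∀ i, 0 ≤ g i)
    (hfg : ∀ i, (1 - c) * g i ≤ f i) (hf : Summable f) (hg : Summable g) :
    Summable fun i => |f i - g i| :=
  .of_nonneg_of_le (fun _ => abs_nonneg _)
    (fun i => abs_sub_le_sub_add_two_mul hc (hg0 i) (hfg i)) ((hf.sub hg).add (hg.mul_left _))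

theorem tsum_abs_sub_le_of_one_sub_mul_le (hc : 0 ≤ c) (hg0 : ∀ i, 0 ≤ g i)
    (hfg : ∀ i, (1 - c) * g i ≤ f i) (hf : HasSum f s) (hg : HasSum g s) :
    ∑' i, |f i - g i| ≤ 2 * c * s := by
  have hbound := (hf.sub hg).add (hg.mul_left (2 * c))
  rw [sub_self, zero_add] at hbound
  exact hasSum_le (fun i => abs_sub_le_sub_add_two_mul hc (hg0 i) (hfg i))
    (summable_abs_sub_of_one_sub_mul_le hc hg0 hfg hf.summable hg.summable).hasSum hbound

end TotalVariation

theorem pow_le_pow_mul_exp_sub {x : ℝ} (hx : 0 ≤ x) (k : ℕ) :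
    x ^ k ≤ (k : ℝ) ^ k * exp (x - k) := by
  rcases k.eq_zero_or_pos with rfl | hk
  · simpa using one_le_exp hx
  have hk' : (0 : ℝ) < k := by exact_mod_cast hk
  have h : x / k ≤ exp (x / k - 1) := by simpa using add_one_le_exp (x / k - 1)
  calc x ^ k = (k : ℝ) ^ k * (x / k) ^ k := by rw [← mul_pow, mul_div_cancel₀ _ hk'.ne']
    _ ≤ (k : ℝ) ^ k * exp (x / k - 1) ^ k := by gcongr
    _ = (k : ℝ) ^ k * exp (x - k) := by
      rw [← exp_nat_mul]
      field_simp

theorem descFactorial_mul_pow_mul_exp_le (k j : ℕ) :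
    ((k + j).descFactorial j : ℝ) * (k + 1) ^ (k + 1) * exp j ≤ (k + j + 1) ^ (k + j + 1) := by
  induction j with
  | zero => simp
  | succ j ih =>
    have hstep := pow_le_pow_mul_exp_sub (x := k + j + 1) (by positivity) (k + j + 2)
    rw [← add_assoc, succ_descFactorial_succ]
    push_cast at hstep ⊢
    calc ((k + j + 1 : ℝ) * (k + j).descFactorial j) * (k + 1) ^ (k + 1) * exp (j + 1)
        = (k + j + 1) * exp 1 * (((k + j).descFactorial j : ℝ) * (k + 1) ^ (k + 1) * exp j) := by
          rw [exp_add]; ring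
      _ ≤ (k + j + 1) * exp 1 * (k + j + 1) ^ (k + j + 1) := by gcongr
      _ = (k + j + 1) ^ (k + j + 2) * exp 1 := by ring
      _ ≤ (k + j + 2) ^ (k + j + 2) * exp (k + j + 1 - (k + j + 2)) * exp 1 := by gcongr
      _ = (k + (j + 1) + 1) ^ (k + (j + 1) + 1) := by
        rw [mul_assoc, ← exp_add]
        ring_nf
        simp

theorem one_sub_mul_binomialWeight_le_poissonWeight {p : ℝ} (hp0 : 0 ≤ p) (hp1 : p ≤ 1)
    (n j : ℕ) : (1 - p) * binomialWeight n p j ≤ poissonWeight ((n + 1) * p) j := by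
  rcases lt_or_ge n j with hnj | hjn
  · rw [binomialWeight, Nat.choose_eq_zero_of_lt hnj, cast_zero, zero_mul, zero_mul, mul_zero]
    unfold poissonWeight
    positivity
  obtain ⟨k, rfl⟩ := Nat.exists_eq_add_of_le' hjn
  set N : ℝ := k + j + 1 with hN
  set D : ℝ := (((k + j).descFactorial j : ℕ) : ℝ) with hD
  have key : D * (1 - p) ^ (k + 1) ≤ N ^ j * exp (-(N * p)) := by
    -- `(N (1-p))^(k+1) e^(N p)` is largest at `1 - p = (k+1)/N`, where it is `(k+1)^(k+1) e^j`
    have hA := pow_le_pow_mul_exp_sub (x := N * (1 - p)) (by nlinarith) (k + 1)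
    refine le_of_mul_le_mul_left ?_ (by positivity : 0 < N ^ (k + 1) * exp (N * p))
    calc N ^ (k + 1) * exp (N * p) * (D * (1 - p) ^ (k + 1))
        = D * ((N * (1 - p)) ^ (k + 1) * exp (N * p)) := by rw [mul_pow]; ring
      _ ≤ D * ((k + 1 : ℕ) ^ (k + 1) * exp (N * (1 - p) - (k + 1 : ℕ)) * exp (N * p)) := by
        gcongr
      _ = D * (k + 1) ^ (k + 1) * exp j := by
        rw [mul_assoc _ (exp _), ← exp_add, hN]
        push_cast
        ring_nf
      _ ≤ N ^ (k + j + 1) := descFactorial_mul_pow_mul_exp_le k j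
      _ = N ^ (k + 1) * exp (N * p) * (N ^ j * exp (-(N * p))) := by
        rw [exp_neg]
        field_simp
        ring
  calc (1 - p) * binomialWeight (k + j) p j
      = D * (1 - p) ^ (k + 1) * (p ^ j / j !) := by
        rw [binomialWeight, Nat.add_sub_cancel, hD, descFactorial_eq_factorial_mul_choose]
        push_cast
        field_simp
        ring
    _ ≤ N ^ j * exp (-(N * p)) * (p ^ j / j !) := by gcongr
    _ = poissonWeight ((((k + j : ℕ) : ℝ) + 1) * p) j := by
      rw [poissonWeight, hN, mul_pow]
      push_cast
      ring

theorem succ_mul_abs_poissonWeight_sub_binomialWeight_succ (n : ℕ) {p : ℝ} (hp : 0 ≤ p) (m : ℕ) :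
    ((m + 1 : ℕ) : ℝ) *
        |poissonWeight ((n + 1) * p) (m + 1) - binomialWeight (n + 1) p (m + 1)| =
      (n + 1) * p * |poissonWeight ((n + 1) * p) m - binomialWeight n p m| := by
  have h : ((m + 1 : ℕ) : ℝ) *
        (poissonWeight ((n + 1) * p) (m + 1) - binomialWeight (n + 1) p (m + 1)) =
      (n + 1) * p * (poissonWeight ((n + 1) * p) m - binomialWeight n p m) := by
    push_cast
    rw [mul_sub, mul_sub, succ_mul_poissonWeight_succ, succ_mul_binomialWeight_succ]
  rw [← Nat.abs_cast, ← abs_mul, h, abs_mul, abs_of_nonneg (by positivity)]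

/-- First-moment weighted comparison of the Poisson distribution with mean `n*p`
and the binomial distribution with parameters `n, p`: the sum
`∑ m, m * |Poisson(np)(m) - Binomial(n,p)(m)|` is at most `2*n*p^2`.
Here `Nat.choose n m = 0` for `m > n`. -/
theorem poisson_binomial_first_moment_le (n : ℕ) (p : ℝ) (hp : 0 < p) (hp1 : p ≤ 1) :
    ∑' m : ℕ, (m : ℝ) * |((n : ℝ) * p) ^ m / (Nat.factorial m) * Real.exp (-((n : ℝ) * p)) -
      (n.choose m : ℝ) * p ^ m * (1 - p) ^ (n - m)| ≤ 2 * n * p ^ 2 := by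
  change ∑' m : ℕ, (m : ℝ) * |poissonWeight (n * p) m - binomialWeight n p m| ≤ _
  rcases n with _ | n
  · have hterm (m : ℕ) : (m : ℝ) * |poissonWeight 0 m - binomialWeight 0 p m| = 0 := by
      cases m <;> simp [poissonWeight, binomialWeight]
    simp [hterm]
  push_cast
  have hweights := one_sub_mul_binomialWeight_le_poissonWeight hp.le hp1 n
  have hbinom0 := binomialWeight_nonneg hp.le hp1 n
  have hsummable := summable_abs_sub_of_one_sub_mul_le hp.le hbinom0 hweights
    (hasSum_poissonWeight _).summable (hasSum_binomialWeight n p).summable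
  have htv := tsum_abs_sub_le_of_one_sub_mul_le hp.le hbinom0 hweights
    (hasSum_poissonWeight _) (hasSum_binomialWeight n p)
  have hshift := succ_mul_abs_poissonWeight_sub_binomialWeight_succ n hp.le
  rw [tsum_eq_zero_add' (by simpa only [hshift] using hsummable.mul_left ((n + 1) * p))]
  simp only [hshift, tsum_mul_left, cast_zero, zero_mul, zero_add]
  calc (n + 1) * p * ∑' m, |poissonWeight ((n + 1) * p) m - binomialWeight n p m|
      ≤ (n + 1) * p * (2 * p * 1) := by gcongr
    _ = 2 * (n + 1) * p ^ 2 := by ring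
end

section
/- For every real number a > 0, the integral ∫₀^a (log x)·log(a−x) dx equals a·[(log a)² − 2 log a + 2 − π²/6]. -/
/-!
The substitution `x = a t` and `log (a t) = log a + log t` reduce everything to `∫₀¹ log t` and
`∫₀¹ log t * log (1 - t)`. For the latter, expand `-log (1 - t) = ∑ t ^ (n + 1) / (n + 1)`; the terms
`-log t * t ^ (n + 1) / (n + 1)` are nonnegative, hence dominated by their integrable sum, and
`∫₀¹ t ^ (n + 1) log t = -1 / (n + 2) ^ 2` turns the integral into
`∑ 1 / ((n + 1) (n + 2) ^ 2) = ∑ (1 / (n + 1) - 1 / (n + 2)) - ∑ 1 / (n + 2) ^ 2 = 1 - (π ^ 2 / 6 - 1)`.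
-/

open Real MeasureTheory Set Filter Topology intervalIntegral
open scoped Interval

lemma hasSum_sub_succ_of_antitone {f : ℕ → ℝ} {l : ℝ} (hf : Antitone f)
    (hl : Tendsto f atTop (𝓝 l)) : HasSum (fun n ↦ f n - f (n + 1)) (f 0 - l) := by
  rw [hasSum_iff_tendsto_nat_of_nonneg fun n ↦ sub_nonneg.mpr (hf n.le_succ)]
  simp_rw [Finset.sum_range_sub']
  exact tendsto_const_nhds.sub hl

lemma hasSum_one_div_succ_mul_add_two_sq :
    HasSum (fun n : ℕ ↦ 1 / ((n + 1) * (n + 2) ^ 2 : ℝ)) (2 - π ^ 2 / 6) := by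
  have htelescope : HasSum (fun n : ℕ ↦ 1 / (n + 1 : ℝ) - 1 / (n + 2)) 1 := by
    have := hasSum_sub_succ_of_antitone (f := fun n : ℕ ↦ 1 / (n + 1 : ℝ))
      (fun m n h ↦ by dsimp only; gcongr) tendsto_one_div_add_atTop_nhds_zero_nat
    simpa [add_assoc, one_add_one_eq_two] using this
  have hzeta : HasSum (fun n : ℕ ↦ 1 / (n + 2 : ℝ) ^ 2) (π ^ 2 / 6 - 1) := by
    have := (hasSum_nat_add_iff' 2).mpr hasSum_zeta_two
    simpa [Finset.sum_range_succ] using this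
  have hsplit (n : ℕ) :
      1 / ((n + 1) * (n + 2) ^ 2 : ℝ) = 1 / (n + 1) - 1 / (n + 2) - 1 / (n + 2) ^ 2 := by
    field_simp
    ring
  simp_rw [hsplit, show (2 : ℝ) - π ^ 2 / 6 = 1 - (π ^ 2 / 6 - 1) by ring]
  exact htelescope.sub hzeta

lemma intervalIntegrable_pow_mul_log (n : ℕ) (a b : ℝ) :
    IntervalIntegrable (fun x ↦ x ^ n * log x) volume a b :=
  intervalIntegrable_log'.continuousOn_mul (continuous_pow n).continuousOn

lemma integral_pow_mul_log_from_zero (n : ℕ) (b : ℝ) :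
    ∫ x in 0..b, x ^ n * log x = b ^ (n + 1) * log b / (n + 1) - b ^ (n + 1) / (n + 1) ^ 2 := by
  set G : ℝ → ℝ := fun x ↦ x ^ (n + 1) * log x / (n + 1) - x ^ (n + 1) / (n + 1) ^ 2
  have hG : Continuous G := by
    have : Continuous fun x : ℝ ↦ x ^ (n + 1) * log x :=
      ((continuous_pow n).mul continuous_mul_log).congr fun x ↦ by simp only [Pi.mul_apply]; ring
    fun_prop
  have hG' (x : ℝ) (hx : x ≠ 0) : HasDerivAt G (x ^ n * log x) x := by
    refine ((((hasDerivAt_pow (n + 1) x).mul (hasDerivAt_log hx)).div_const (n + 1 : ℝ)).sub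
      ((hasDerivAt_pow (n + 1) x).div_const ((n + 1 : ℝ) ^ 2))).congr_deriv ?_
    push_cast
    field_simp
    ring
  have := integral_eq_sub_of_hasDeriv_right hG.continuousOn
    (fun x hx ↦ (hG' x ?_).hasDerivWithinAt) (intervalIntegrable_pow_mul_log n 0 b)
  · simpa [G] using this
  · rintro rfl
    simp at hx
    linarith

lemma integral_pow_mul_log (n : ℕ) : ∫ x in 0..1, x ^ n * log x = -1 / (n + 1) ^ 2 := by
  simp [integral_pow_mul_log_from_zero, neg_div]

lemma intervalIntegrable_log_one_sub (a b : ℝ) :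
    IntervalIntegrable (fun x ↦ log (1 - x)) volume a b := by
  simpa using (intervalIntegrable_log' (a := 1 - a) (b := 1 - b)).comp_sub_left 1

lemma intervalIntegrable_log_mul_log_one_sub :
    IntervalIntegrable (fun x ↦ log x * log (1 - x)) volume 0 1 := by
  have hleft : ContinuousOn (fun x : ℝ ↦ log (1 - x)) (uIcc 0 (1 / 2)) :=
    ContinuousOn.log (f := fun x ↦ 1 - x) (by fun_prop) fun x hx ↦ by
      rw [uIcc_of_le (by norm_num)] at hx; linarith [hx.2]
  have hright : ContinuousOn log (uIcc (1 / 2) 1) :=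
    continuousOn_log.mono fun x hx ↦ by
      rw [uIcc_of_le (by norm_num)] at hx; exact (by linarith [hx.1] : x ≠ 0)
  exact (intervalIntegrable_log'.mul_continuousOn hleft).trans
    ((intervalIntegrable_log_one_sub _ _).continuousOn_mul hright)

lemma integral_log_one_sub : ∫ x in 0..1, log (1 - x) = -1 := by
  simp [integral_comp_sub_left (fun x ↦ log x), integral_log]

lemma hasSum_log_mul_log_one_sub {x : ℝ} (hx : x ∈ Ioc (-1) 1) :
    HasSum (fun n : ℕ ↦ log x * -(x ^ (n + 1) / (n + 1))) (log x * log (1 - x)) := by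
  rcases hx.2.eq_or_lt with rfl | hx1
  · simp
  have := ((hasSum_pow_div_log_of_abs_lt_one (abs_lt.mpr ⟨hx.1, hx1⟩)).neg).mul_left (log x)
  rwa [neg_neg] at this

lemma integral_log_mul_log_one_sub : ∫ x in 0..1, log x * log (1 - x) = 2 - π ^ 2 / 6 := by
  set F : ℕ → ℝ → ℝ := fun n x ↦ log x * -(x ^ (n + 1) / (n + 1))
  have hF_integral (n : ℕ) : ∫ x in 0..1, F n x = 1 / ((n + 1) * (n + 2) ^ 2) := by
    calc ∫ x in 0..1, F n x = -(1 / (n + 1)) * ∫ x in 0..1, x ^ (n + 1) * log x := by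
          rw [← intervalIntegral.integral_const_mul]; congr 1; ext x; simp only [F]; ring
      _ = 1 / ((n + 1) * (n + 2) ^ 2) := by
          rw [integral_pow_mul_log]; push_cast; field_simp; ring
  have hF_nonneg (n : ℕ) {x : ℝ} (hx : x ∈ Ι 0 1) : 0 ≤ F n x := by
    rw [uIoc_of_le zero_le_one] at hx
    exact mul_nonneg_of_nonpos_of_nonpos (log_nonpos hx.1.le hx.2)
      (neg_nonpos.mpr (by have := hx.1.le; positivity))
  have hF_hasSum {x : ℝ} (hx : x ∈ Ι 0 1) : HasSum (F · x) (log x * log (1 - x)) := by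
    rw [uIoc_of_le zero_le_one] at hx
    exact hasSum_log_mul_log_one_sub ⟨by linarith [hx.1], hx.2⟩
  have hsum := hasSum_integral_of_dominated_convergence (F := F) F
    (fun n ↦ (by fun_prop : Measurable (F n)).aestronglyMeasurable)
    (fun n ↦ .of_forall fun x hx ↦ (norm_of_nonneg (hF_nonneg n hx)).le)
    (.of_forall fun x hx ↦ (hF_hasSum hx).summable)
    (intervalIntegrable_log_mul_log_one_sub.congr fun x hx ↦ (hF_hasSum hx).tsum_eq.symm)
    (.of_forall fun x hx ↦ hF_hasSum hx)
  simp_rw [hF_integral] at hsum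
  exact hsum.unique hasSum_one_div_succ_mul_add_two_sq

lemma integral_add_log_mul_add_log_one_sub (c : ℝ) :
    ∫ x in 0..1, (c + log x) * (c + log (1 - x)) = c ^ 2 - 2 * c + 2 - π ^ 2 / 6 := by
  have hlog : IntervalIntegrable log volume 0 1 := intervalIntegrable_log'
  have hlog_one_sub := intervalIntegrable_log_one_sub 0 1
  have hexpand : (fun x ↦ (c + log x) * (c + log (1 - x))) =
      fun x ↦ (c ^ 2 + c * log x + c * log (1 - x)) + log x * log (1 - x) := by
    ext x
    ring
  rw [hexpand, integral_add ((intervalIntegrable_const.add (hlog.const_mul _)).add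
      (hlog_one_sub.const_mul _)) intervalIntegrable_log_mul_log_one_sub,
    integral_add (intervalIntegrable_const.add (hlog.const_mul _)) (hlog_one_sub.const_mul _),
    integral_add intervalIntegrable_const (hlog.const_mul _), intervalIntegral.integral_const_mul,
    intervalIntegral.integral_const_mul, integral_log_one_sub, integral_log_mul_log_one_sub]
  simp only [intervalIntegral.integral_const, sub_zero, smul_eq_mul, one_mul, integral_log, log_one,
    mul_zero, log_zero, sub_self, zero_sub, add_zero, mul_neg, mul_one]
  ring

/-- For `a > 0`, `∫₀^a (log x) * log(a - x) dx = a * ((log a)² - 2 log a + 2 - π²/6)`. -/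
theorem integral_log_mul_log_sub_eq (a : ℝ) (ha : 0 < a) :
    ∫ x in (0:ℝ)..a, Real.log x * Real.log (a - x)
      = a * ((Real.log a) ^ 2 - 2 * Real.log a + 2 - Real.pi ^ 2 / 6) := by
  have hlog_mul {x : ℝ} (hx : x ≠ 0) : log (a * x) = log a + log x := log_mul ha.ne' hx
  calc ∫ x in 0..a, log x * log (a - x)
      = a * ∫ x in 0..1, log (a * x) * log (a - a * x) := by
        simpa using (smul_integral_comp_mul_left (fun x ↦ log x * log (a - x)) a (a := 0) (b := 1)).symm
    _ = a * ∫ x in 0..1, (log a + log x) * (log a + log (1 - x)) := by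
        congr 1
        refine integral_congr_Ioo_of_le zero_le_one fun x hx ↦ ?_
        rw [← mul_one_sub, hlog_mul hx.1.ne', hlog_mul (sub_pos.mpr hx.2).ne']
    _ = a * (log a ^ 2 - 2 * log a + 2 - π ^ 2 / 6) := by
        rw [integral_add_log_mul_add_log_one_sub]
end

section
/- Let Y be a Poisson random variable with mean M ≥ 1. Then E[1/(Y+1)²] ≤ M^{−2}(1 + 3M^{−1}). -/
/-!
For `k ≥ 0` one has `1/(k+1)² ≤ 1/((k+1)(k+2)) + 3/((k+1)(k+2)(k+3))`, so against the Poisson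
weight `M^k/k!` the `k`-th term is at most `M⁻² · M^(k+2)/(k+2)! + 3M⁻³ · M^(k+3)/(k+3)!`.
Each of these two shifted exponential series is at most `e^M`, which cancels the factor `e^(-M)`.
-/

open Nat Real

theorem one_div_add_one_sq_le {x : ℝ} (hx : 0 ≤ x) :
    1 / (x + 1) ^ 2 ≤ 1 / ((x + 1) * (x + 2)) + 3 / ((x + 1) * (x + 2) * (x + 3)) := by
  rw [div_add_div _ _ (by positivity) (by positivity),
    div_le_div_iff₀ (by positivity) (by positivity)]
  nlinarith [mul_nonneg hx hx, mul_nonneg (mul_nonneg hx hx) hx]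

theorem one_div_factorial_mul_one_div_succ_sq_le (k : ℕ) :
    1 / (k ! : ℝ) * (1 / ((k : ℝ) + 1) ^ 2) ≤ 1 / ((k + 2)! : ℝ) + 3 / ((k + 3)! : ℝ) := by
  have h2 : ((k + 2)! : ℝ) = k ! * ((k + 1) * (k + 2)) := by
    push_cast [factorial_succ]; ring
  have h3 : ((k + 3)! : ℝ) = k ! * ((k + 1) * (k + 2) * (k + 3)) := by
    push_cast [factorial_succ]; ring
  calc _ ≤ 1 / (k ! : ℝ) * (1 / ((k + 1) * (k + 2)) + 3 / ((k + 1) * (k + 2) * (k + 3))) := by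
        gcongr; exact one_div_add_one_sq_le k.cast_nonneg
    _ = _ := by rw [h2, h3]; field_simp

theorem summable_pow_div_factorial_add (x : ℝ) (j : ℕ) :
    Summable fun k : ℕ => x ^ k / ((k + j)! : ℝ) := by
  refine (Real.summable_pow_div_factorial |x|).of_norm_bounded fun k => ?_
  rw [norm_div, norm_pow, Real.norm_natCast, Real.norm_eq_abs]
  gcongr
  omega

theorem tsum_pow_add_div_factorial_le_exp {x : ℝ} (hx : 0 ≤ x) (j : ℕ) :
    ∑' k : ℕ, x ^ (k + j) / ((k + j)! : ℝ) ≤ exp x := by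
  rw [Real.exp_eq_exp_ℝ, NormedSpace.exp_eq_tsum_div]
  exact Summable.tsum_le_tsum_of_inj (· + j) (add_left_injective j) (fun _ _ => by positivity)
    (fun _ => le_rfl) ((summable_nat_add_iff j).mpr (Real.summable_pow_div_factorial x))
    (Real.summable_pow_div_factorial x)

theorem tsum_pow_div_factorial_add_le {x : ℝ} (hx : 0 < x) (j : ℕ) :
    ∑' k : ℕ, x ^ k / ((k + j)! : ℝ) ≤ x⁻¹ ^ j * exp x := by
  have hshift (k : ℕ) : x ^ k / ((k + j)! : ℝ) = x⁻¹ ^ j * (x ^ (k + j) / ((k + j)! : ℝ)) := by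
    rw [pow_add, inv_pow]
    field_simp
  rw [tsum_congr hshift, tsum_mul_left]
  gcongr
  exact tsum_pow_add_div_factorial_le_exp hx.le j

/-- For a Poisson random variable `Y` with mean `M ≥ 1` (so `P(Y = k) =
M^k e^{-M} / k!`), one has `E[1/(Y+1)²] ≤ M⁻²(1 + 3 M⁻¹)`. -/
theorem poisson_inv_succ_sq_moment (M : ℝ) (hM : 1 ≤ M) :
    (∑' k : ℕ, (M ^ k * Real.exp (-M) / Nat.factorial k) * (1 / ((k : ℝ) + 1) ^ 2))
      ≤ M⁻¹ ^ 2 * (1 + 3 * M⁻¹) := by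
  have hM₀ : 0 < M := one_pos.trans_le hM
  set bound : ℕ → ℝ := fun k =>
    exp (-M) * (M ^ k / ((k + 2)! : ℝ) + 3 * (M ^ k / ((k + 3)! : ℝ))) with hbound
  have hbound_summable : Summable bound :=
    ((summable_pow_div_factorial_add M 2).add
      ((summable_pow_div_factorial_add M 3).mul_left 3)).mul_left _
  have hterm_le (k : ℕ) :
      M ^ k * exp (-M) / k ! * (1 / ((k : ℝ) + 1) ^ 2) ≤ bound k := by
    calc _ = M ^ k * exp (-M) * (1 / (k ! : ℝ) * (1 / ((k : ℝ) + 1) ^ 2)) := by ring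
      _ ≤ M ^ k * exp (-M) * (1 / ((k + 2)! : ℝ) + 3 / ((k + 3)! : ℝ)) := by
          gcongr; exact one_div_factorial_mul_one_div_succ_sq_le k
      _ = bound k := by rw [hbound]; ring
  calc _ ≤ ∑' k, bound k :=
        (hbound_summable.of_nonneg_of_le (fun _ => by positivity) hterm_le).tsum_le_tsum hterm_le
          hbound_summable
    _ = exp (-M) * (∑' k : ℕ, M ^ k / ((k + 2)! : ℝ) + 3 * ∑' k : ℕ, M ^ k / ((k + 3)! : ℝ)) := by
        rw [tsum_mul_left, (summable_pow_div_factorial_add M 2).tsum_add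
          ((summable_pow_div_factorial_add M 3).mul_left 3), tsum_mul_left]
    _ ≤ exp (-M) * (M⁻¹ ^ 2 * exp M + 3 * (M⁻¹ ^ 3 * exp M)) := by
        gcongr <;> exact tsum_pow_div_factorial_add_le hM₀ _
    _ = M⁻¹ ^ 2 * (1 + 3 * M⁻¹) := by
        rw [exp_neg]
        field_simp
end

section
/- Transfer lemma: Let (ξ_n) and (ξ'_n) be sequences of real random variables with means μ_n, μ'_n and variances σ_n², σ'_n² ∈ (0,∞). Suppose there exist sequences ε₁(n),…,ε₄(n) → 0 with: (i) |μ'_n − μ_n| ≤ ε₁(n)σ_n; (ii) |σ'_n² − σ_n²| ≤ ε₂(n)σ_n²; (iii) sup_x |P(ξ'_n ≤ x) − P(ξ_n ≤ x)| ≤ ε₃(n); (iv) sup_x |P((ξ'_n − μ'_n)/σ'_n ≤ x) − Φ(x)| ≤ ε₄(n). Then there exists a constant C > 0 such that sup_x |P((ξ_n − μ_n)/σ_n ≤ x) − Φ(x)| ≤ C·(ε₁(n)+ε₂(n)+ε₃(n)+ε₄(n)) for all n. -/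
open MeasureTheory

/-- The standard Gaussian cumulative distribution function. -/
noncomputable def stdGaussianCDF (x : ℝ) : ℝ :=
  ∫ t in Set.Iic x, Real.exp (-t ^ 2 / 2) / Real.sqrt (2 * Real.pi)



noncomputable def gpdf (t : ℝ) : ℝ := Real.exp (-t ^ 2 / 2) / Real.sqrt (2 * Real.pi)

lemma gpdf_eq : gpdf = fun t => Real.exp (-(1/2) * t ^ 2) / Real.sqrt (2 * Real.pi) := by
  funext t; unfold gpdf; ring_nf

lemma integrable_gpdf : Integrable gpdf := by
  rw [gpdf_eq]
  exact (integrable_exp_neg_mul_sq (by norm_num : (0:ℝ) < 1/2)).div_const _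

lemma integral_gpdf : ∫ t, gpdf t = 1 := by
  rw [gpdf_eq]
  rw [integral_div, integral_gaussian]
  rw [show Real.pi / (1/2) = 2 * Real.pi by ring]
  rw [div_self (by positivity)]

lemma gpdf_nonneg (t : ℝ) : 0 ≤ gpdf t := by unfold gpdf; positivity

lemma gpdf_le_one (t : ℝ) : gpdf t ≤ 1 := by
  unfold gpdf
  rw [div_le_one (by positivity)]
  calc Real.exp (-t ^ 2 / 2) ≤ 1 := Real.exp_le_one_iff.2 (by nlinarith [sq_nonneg t])
    _ ≤ Real.sqrt (2 * Real.pi) := by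
        rw [show (1:ℝ) = Real.sqrt 1 by simp]
        exact Real.sqrt_le_sqrt (by nlinarith [Real.pi_gt_three])

lemma cdf_eq (x : ℝ) : stdGaussianCDF x = ∫ t in Set.Iic x, gpdf t := rfl

lemma cdf_nonneg (x : ℝ) : 0 ≤ stdGaussianCDF x := by
  exact setIntegral_nonneg measurableSet_Iic (fun t _ => gpdf_nonneg t)

lemma cdf_le_one (x : ℝ) : stdGaussianCDF x ≤ 1 := by
  rw [cdf_eq, ← integral_gpdf]
  exact setIntegral_le_integral integrable_gpdf (Filter.Eventually.of_forall gpdf_nonneg)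

lemma cdf_sub (x y : ℝ) :
    stdGaussianCDF y - stdGaussianCDF x = ∫ t in x..y, gpdf t := by
  rw [cdf_eq, cdf_eq]
  exact intervalIntegral.integral_Iic_sub_Iic integrable_gpdf.integrableOn integrable_gpdf.integrableOn

lemma cdf_lip (x y : ℝ) : |stdGaussianCDF y - stdGaussianCDF x| ≤ |y - x| := by
  rw [cdf_sub]
  calc |∫ t in x..y, gpdf t| ≤ 1 * |y - x| :=
        intervalIntegral.norm_integral_le_of_norm_le_const (fun t _ => by
          rw [Real.norm_eq_abs, abs_of_nonneg (gpdf_nonneg t)]; exact gpdf_le_one t)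
    _ = |y - x| := one_mul _

lemma cdf_scale (a x : ℝ) (ha0 : 0 < a) (ha : 1 ≤ 2 * a ^ 2) :
    |stdGaussianCDF (a * x) - stdGaussianCDF x| ≤ |a - 1| := by
  rw [cdf_sub]
  have key : ∀ t ∈ Set.uIoc x (a * x),
      ‖gpdf t‖ ≤ Real.exp (-x ^ 2 / 4) / Real.sqrt (2 * Real.pi) := by
    intro t ht
    have h1 := ht.1
    have h2 := ht.2
    have hx2 : x ^ 2 ≤ 2 * t ^ 2 := by
      rcases le_total x (a * x) with hc | hc
      · rw [min_eq_left hc] at h1; rw [max_eq_right hc] at h2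
        rcases le_total 0 x with hx | hx
        · nlinarith
        · have hax : a * x ≤ 0 := mul_nonpos_of_nonneg_of_nonpos ha0.le hx
          nlinarith [mul_nonneg (by linarith : (0:ℝ) ≤ a * x - t)
            (by linarith : (0:ℝ) ≤ -(t + a * x)),
            mul_le_mul_of_nonneg_right ha (sq_nonneg x)]
      · rw [min_eq_right hc] at h1; rw [max_eq_left hc] at h2
        rcases le_total 0 x with hx | hx
        · have hax : 0 ≤ a * x := mul_nonneg ha0.le hx
          nlinarith [mul_nonneg (by linarith : (0:ℝ) ≤ t - a * x)
            (by linarith : (0:ℝ) ≤ t + a * x),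
            mul_le_mul_of_nonneg_right ha (sq_nonneg x)]
        · nlinarith
    rw [Real.norm_eq_abs, abs_of_nonneg (gpdf_nonneg t)]
    unfold gpdf
    rw [div_le_div_iff_of_pos_right (by positivity)]
    exact Real.exp_le_exp.2 (by linarith)
  calc |∫ t in x..(a * x), gpdf t|
      ≤ (Real.exp (-x ^ 2 / 4) / Real.sqrt (2 * Real.pi)) * |a * x - x| :=
        intervalIntegral.norm_integral_le_of_norm_le_const key
    _ = (|x| * Real.exp (-x ^ 2 / 4)) / Real.sqrt (2 * Real.pi) * |a - 1| := by
        rw [show a * x - x = (a - 1) * x by ring, abs_mul]; ring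
    _ ≤ 1 * |a - 1| := by
        gcongr
        rw [div_le_one (by positivity)]
        have h1 : |x| * Real.exp (-x ^ 2 / 4) ≤ 1 := by
          have h2 : |x| ≤ Real.exp (x ^ 2 / 4) := by
            calc |x| ≤ 1 + x ^ 2 / 4 := by nlinarith [sq_nonneg (|x| - 2), sq_abs x]
              _ ≤ Real.exp (x ^ 2 / 4) := by
                  have := Real.add_one_le_exp (x ^ 2 / 4); linarith
          calc |x| * Real.exp (-x ^ 2 / 4)
              ≤ Real.exp (x ^ 2 / 4) * Real.exp (-x ^ 2 / 4) :=
                mul_le_mul_of_nonneg_right h2 (Real.exp_pos _).le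
            _ = 1 := by rw [← Real.exp_add, show x ^ 2 / 4 + -x ^ 2 / 4 = 0 by ring, Real.exp_zero]
        calc |x| * Real.exp (-x ^ 2 / 4) ≤ 1 := h1
          _ ≤ Real.sqrt (2 * Real.pi) := by
              rw [show (1:ℝ) = Real.sqrt 1 by simp]
              exact Real.sqrt_le_sqrt (by nlinarith [Real.pi_gt_three])
    _ = |a - 1| := one_mul _

/-- Transfer lemma: given two sequences of distributions `P n` (law of `ξ_n`) and
`Q n` (law of `ξ'_n`) with means `μ n, μ' n` and variances `(σ n)², (σ' n)² ∈ (0,∞)`,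
if (i) `|μ' n - μ n| ≤ ε₁ n * σ n`, (ii) `|(σ' n)² - (σ n)²| ≤ ε₂ n * (σ n)²`,
(iii) `sup_x |P(ξ'_n ≤ x) - P(ξ_n ≤ x)| ≤ ε₃ n`, and (iv) the normalized `ξ'_n`
satisfies a Berry-Esseen bound with error `ε₄ n`, where `ε₁, …, ε₄ → 0`, then
there is an absolute constant `C > 0` such that the normalized `ξ_n` satisfies a
Berry-Esseen bound with error `C (ε₁ n + ε₂ n + ε₃ n + ε₄ n)`. -/
theorem transfer_lemma :
    ∃ C > 0, ∀ (P Q : ℕ → Measure ℝ),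
      (∀ n, IsProbabilityMeasure (P n)) → (∀ n, IsProbabilityMeasure (Q n)) →
      ∀ μ μ' σ σ' ε₁ ε₂ ε₃ ε₄ : ℕ → ℝ,
      (∀ n, μ n = ∫ x, x ∂(P n)) → (∀ n, μ' n = ∫ x, x ∂(Q n)) →
      (∀ n, 0 < σ n) → (∀ n, 0 < σ' n) →
      (∀ n, (σ n) ^ 2 = ∫ x, (x - μ n) ^ 2 ∂(P n)) →
      (∀ n, (σ' n) ^ 2 = ∫ x, (x - μ' n) ^ 2 ∂(Q n)) →
      Filter.Tendsto ε₁ Filter.atTop (nhds 0) →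
      Filter.Tendsto ε₂ Filter.atTop (nhds 0) →
      Filter.Tendsto ε₃ Filter.atTop (nhds 0) →
      Filter.Tendsto ε₄ Filter.atTop (nhds 0) →
      (∀ n, |μ' n - μ n| ≤ ε₁ n * σ n) →
      (∀ n, |(σ' n) ^ 2 - (σ n) ^ 2| ≤ ε₂ n * (σ n) ^ 2) →
      (∀ n, ∀ x : ℝ, |(Q n (Set.Iic x)).toReal - (P n (Set.Iic x)).toReal| ≤ ε₃ n) →
      (∀ n, ∀ x : ℝ,
        |(Q n (Set.Iic (σ' n * x + μ' n))).toReal - stdGaussianCDF x| ≤ ε₄ n) →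
      ∀ n, ∀ x : ℝ,
        |(P n (Set.Iic (σ n * x + μ n))).toReal - stdGaussianCDF x|
          ≤ C * (ε₁ n + ε₂ n + ε₃ n + ε₄ n) := by
  refine ⟨2, by norm_num, ?_⟩
  intro P Q hP hQ μ μ' σ σ' ε₁ ε₂ ε₃ ε₄ _ _ hσ hσ' _ _ _ _ _ _ h1 h2 h3 h4 n x
  have hs := hσ n
  have hs' := hσ' n
  have he1 : 0 ≤ ε₁ n := by
    by_contra h
    nlinarith [(abs_nonneg (μ' n - μ n)).trans (h1 n)]
  have he2 : 0 ≤ ε₂ n := by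
    by_contra h
    nlinarith [(abs_nonneg ((σ' n) ^ 2 - (σ n) ^ 2)).trans (h2 n), pow_pos hs 2]
  have he3 : 0 ≤ ε₃ n := (abs_nonneg _).trans (h3 n 0)
  have he4 : 0 ≤ ε₄ n := (abs_nonneg _).trans (h4 n 0)
  have hPn := hP n
  have hP1 : (P n (Set.Iic (σ n * x + μ n))).toReal ≤ 1 := by
    have h := measure_mono (Set.subset_univ (Set.Iic (σ n * x + μ n))) (μ := P n)
    rw [measure_univ] at h
    simpa using ENNReal.toReal_mono (by simp) h
  have hP0 : 0 ≤ (P n (Set.Iic (σ n * x + μ n))).toReal := ENNReal.toReal_nonneg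
  rcases le_or_gt (ε₂ n) (1/2) with hcase | hcase
  · -- main case
    have hv := abs_le.1 (h2 n)
    have hs2 : σ' n ^ 2 ≤ 2 * σ n ^ 2 := by nlinarith [sq_nonneg (σ n)]
    have hs3 : σ n ^ 2 ≤ 2 * σ' n ^ 2 := by nlinarith [sq_nonneg (σ n)]
    have hsle : σ n ≤ 2 * σ' n := by nlinarith
    set a := σ n / σ' n with ha_def
    set b := (μ n - μ' n) / σ' n with hb_def
    have ha0 : 0 < a := div_pos hs hs'
    have ha : 1 ≤ 2 * a ^ 2 := by
      rw [ha_def, div_pow, mul_div_assoc']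
      rw [le_div_iff₀ (by positivity)]
      linarith
    have hy : σ' n * (a * x + b) + μ' n = σ n * x + μ n := by
      rw [ha_def, hb_def]; field_simp; ring
    have hb : |b| ≤ 2 * ε₁ n := by
      rw [hb_def, abs_div, abs_of_pos hs', div_le_iff₀ hs']
      calc |μ n - μ' n| = |μ' n - μ n| := abs_sub_comm _ _
        _ ≤ ε₁ n * σ n := h1 n
        _ ≤ 2 * ε₁ n * σ' n := by nlinarith
    have hadiff : |a - 1| ≤ 2 * ε₂ n := by
      have hss : |σ n - σ' n| ≤ 2 * ε₂ n * σ' n := by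
        rcases le_total (σ n) (σ' n) with h | h
        · rw [abs_of_nonpos (by linarith)]
          nlinarith [mul_nonneg (sub_nonneg.2 h) hs.le]
        · rw [abs_of_nonneg (by linarith)]
          nlinarith [mul_nonneg (sub_nonneg.2 h) hs.le]
      rw [show a - 1 = (σ n - σ' n) / σ' n by rw [ha_def]; field_simp]
      rw [abs_div, abs_of_pos hs', div_le_iff₀ hs']
      linarith
    have key := h4 n (a * x + b)
    rw [hy] at key
    have h3' := h3 n (σ n * x + μ n)
    have lip : |stdGaussianCDF (a * x + b) - stdGaussianCDF (a * x)| ≤ |b| := by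
      have := cdf_lip (a * x) (a * x + b)
      simpa using this
    have sc := cdf_scale a x ha0 ha
    set A := (P n (Set.Iic (σ n * x + μ n))).toReal
    set B := (Q n (Set.Iic (σ n * x + μ n))).toReal
    have tri : |A - stdGaussianCDF x| ≤ |A - B| + |B - stdGaussianCDF (a * x + b)| +
        |stdGaussianCDF (a * x + b) - stdGaussianCDF (a * x)| +
        |stdGaussianCDF (a * x) - stdGaussianCDF x| := by
      calc |A - stdGaussianCDF x|
          ≤ |A - B| + |B - stdGaussianCDF x| := abs_sub_le _ _ _
        _ ≤ |A - B| + (|B - stdGaussianCDF (a * x + b)| +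
            |stdGaussianCDF (a * x + b) - stdGaussianCDF x|) := by
            gcongr; exact abs_sub_le _ _ _
        _ ≤ |A - B| + (|B - stdGaussianCDF (a * x + b)| +
            (|stdGaussianCDF (a * x + b) - stdGaussianCDF (a * x)| +
             |stdGaussianCDF (a * x) - stdGaussianCDF x|)) := by
            gcongr; exact abs_sub_le _ _ _
        _ = _ := by ring
    have hAB : |A - B| ≤ ε₃ n := by rw [abs_sub_comm]; exact h3'
    calc |A - stdGaussianCDF x| ≤ ε₃ n + ε₄ n + (2 * ε₁ n) + (2 * ε₂ n) := by
          have := tri; linarith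
      _ ≤ 2 * (ε₁ n + ε₂ n + ε₃ n + ε₄ n) := by linarith
  · -- trivial case: ε₂ n > 1/2
    have habs : |(P n (Set.Iic (σ n * x + μ n))).toReal - stdGaussianCDF x| ≤ 1 := by
      rw [abs_le]
      constructor
      · have := cdf_le_one x; linarith
      · have := cdf_nonneg x; linarith
    linarith
end
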